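/- arXiv:1705.03884 — 5 statements merged into one kernel-verified Lean document; each statement's English description precedes it below -/
import Mathlib

section
/- Let G and H be non-trivial finite groups. Then the binary coproduct of G and H is not representable in the category of finite groups; that is, there is no finite group F together with group homomorphisms ι_G : G → F and ι_H : H → F such that for every finite group T and every pair of homomorphisms f_G : G → T, f_H : H → T there exists a unique homomorphism f : F → T with f ∘ ι_G = f_G and f ∘ ι_H = f_H. -/
namespace CoprodNotRep

set_option linter.unusedSectionVars false

open Equiv

variable {G H : Type} [Group G] [Group H] [Finite G] [Finite H]

abbrev XX (m : ℕ) (G H : Type) : Type := (ZMod m × G) ⊕ (ZMod m × H)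
abbrev MM (m : ℕ) (G H : Type) : Type := (ZMod m × H) ⊕ (ZMod m × G)

lemma pow_ne_one_of_lt {b : H} (j : ℕ) (h0 : 0 < j) (hj : j < orderOf b) : b ^ j ≠ 1 := by
  intro h
  have := Nat.le_of_dvd h0 (orderOf_dvd_of_pow_eq_one h)
  omega

lemma two_le_orderOf {b : H} (hb : b ≠ 1) : 2 ≤ orderOf b := by
  have h1 : orderOf b ≠ 1 := by simpa [orderOf_eq_one_iff] using hb
  have h0 : 0 < orderOf b := orderOf_pos b
  omega

/-- `G` acts on `XX` by left multiplication on the `G`-component. -/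
def actG (m : ℕ) : G →* Perm (XX m G H) where
  toFun g := Equiv.sumCongr (Equiv.prodCongr (Equiv.refl _) (Equiv.mulLeft g)) (Equiv.refl _)
  map_one' := by
    ext z; rcases z with ⟨k, x⟩ | ⟨k, y⟩ <;> simp
  map_mul' g₁ g₂ := by
    ext z; rcases z with ⟨k, x⟩ | ⟨k, y⟩ <;> simp [Perm.mul_apply, mul_assoc]

/-- `H` acts on `MM` by left multiplication on the `H`-component. -/
def actHM (m : ℕ) : H →* Perm (MM m G H) where
  toFun h := Equiv.sumCongr (Equiv.prodCongr (Equiv.refl _) (Equiv.mulLeft h)) (Equiv.refl _)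
  map_one' := by
    ext z; rcases z with ⟨k, y⟩ | ⟨k, x⟩ <;> simp
  map_mul' h₁ h₂ := by
    ext z; rcases z with ⟨k, y⟩ | ⟨k, x⟩ <;> simp [Perm.mul_apply, mul_assoc]

open scoped Classical in
/-- The gluing bijection. -/
noncomputable def phi (m : ℕ) (a : G) (b : H) (ha : a ≠ 1) (hb : b ≠ 1) :
    MM m G H ≃ XX m G H where
  toFun z :=
    match z with
    | Sum.inl (k, y) =>
        if y = 1 then Sum.inl (k, 1)
        else if y = b ^ (orderOf b - 1) then Sum.inl (k + 1, a)
        else Sum.inr (k, y)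
    | Sum.inr (k, x) =>
        if x = 1 then Sum.inr (k, 1)
        else if x = a then Sum.inr (k, b ^ (orderOf b - 1))
        else Sum.inl (k, x)
  invFun z :=
    match z with
    | Sum.inl (k, x) =>
        if x = 1 then Sum.inl (k, 1)
        else if x = a then Sum.inl (k - 1, b ^ (orderOf b - 1))
        else Sum.inr (k, x)
    | Sum.inr (k, y) =>
        if y = 1 then Sum.inr (k, 1)
        else if y = b ^ (orderOf b - 1) then Sum.inr (k, a)
        else Sum.inl (k, y)
  left_inv := by
    have hq := two_le_orderOf hb
    have hbq : b ^ (orderOf b - 1) ≠ 1 := pow_ne_one_of_lt _ (by omega) (by omega)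
    rintro (⟨k, y⟩ | ⟨k, x⟩) <;> dsimp only <;> split_ifs <;>
      simp_all [sub_add_cancel]
  right_inv := by
    have hq := two_le_orderOf hb
    have hbq : b ^ (orderOf b - 1) ≠ 1 := pow_ne_one_of_lt _ (by omega) (by omega)
    rintro (⟨k, x⟩ | ⟨k, y⟩) <;> dsimp only <;> split_ifs <;>
      simp_all [add_sub_cancel_right, sub_add_cancel]

variable (m : ℕ) (a : G) (b : H) (ha : a ≠ 1) (hb : b ≠ 1)

noncomputable def actH : H →* Perm (XX m G H) where
  toFun h := (phi m a b ha hb).permCongr (actHM m h)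
  map_one' := by ext z; simp
  map_mul' h₁ h₂ := by ext z; simp [Perm.mul_apply, Equiv.permCongr_apply]

noncomputable def gam : Perm (XX m G H) := actG m a * actH m a b ha hb b

lemma gam_apply (z : XX m G H) :
    gam m a b ha hb z
      = actG m a ((phi m a b ha hb) (actHM m b ((phi m a b ha hb).symm z))) := by
  simp [gam, Perm.mul_apply, actH, Equiv.permCongr_apply]

lemma actG_inl (g : G) (k : ZMod m) (x : G) :
    actG m g (Sum.inl (k, x) : XX m G H) = Sum.inl (k, g * x) := rfl
lemma actG_inr (g : G) (k : ZMod m) (y : H) :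
    actG m g (Sum.inr (k, y) : XX m G H) = Sum.inr (k, y) := rfl
lemma actHM_inl (h : H) (k : ZMod m) (y : H) :
    actHM m h (Sum.inl (k, y) : MM m G H) = Sum.inl (k, h * y) := rfl
lemma actHM_inr (h : H) (k : ZMod m) (x : G) :
    actHM m h (Sum.inr (k, x) : MM m G H) = Sum.inr (k, x) := rfl

lemma phi_inl_one (k : ZMod m) :
    phi m a b ha hb (Sum.inl (k, (1 : H))) = Sum.inl (k, (1 : G)) := by
  simp [phi]

lemma phi_inl_top (k : ZMod m) :
    phi m a b ha hb (Sum.inl (k, b ^ (orderOf b - 1))) = Sum.inl (k + 1, a) := by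
  have hq := two_le_orderOf hb
  have hbq : b ^ (orderOf b - 1) ≠ 1 := pow_ne_one_of_lt _ (by omega) (by omega)
  simp [phi, hbq]

lemma phi_inl_mid (k : ZMod m) (y : H) (h1 : y ≠ 1) (h2 : y ≠ b ^ (orderOf b - 1)) :
    phi m a b ha hb (Sum.inl (k, y)) = Sum.inr (k, y) := by
  simp [phi, h1, h2]

lemma phi_inr_mid (k : ZMod m) (x : G) (h1 : x ≠ 1) (h2 : x ≠ a) :
    phi m a b ha hb (Sum.inr (k, x)) = Sum.inl (k, x) := by
  simp [phi, h1, h2]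

lemma phi_symm_inl_one (k : ZMod m) :
    (phi m a b ha hb).symm (Sum.inl (k, (1 : G))) = Sum.inl (k, (1 : H)) := by
  simp [phi, Equiv.symm]

lemma phi_symm_inl_mid (k : ZMod m) (x : G) (h1 : x ≠ 1) (h2 : x ≠ a) :
    (phi m a b ha hb).symm (Sum.inl (k, x)) = Sum.inr (k, x) := by
  simp [phi, Equiv.symm, h1, h2]

lemma phi_symm_inr_mid (k : ZMod m) (y : H) (h1 : y ≠ 1) (h2 : y ≠ b ^ (orderOf b - 1)) :
    (phi m a b ha hb).symm (Sum.inr (k, y)) = Sum.inl (k, y) := by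
  simp [phi, Equiv.symm, h1, h2]

end CoprodNotRep

namespace Chunk2
open CoprodNotRep Equiv

variable {G H : Type} [Group G] [Group H] [Finite G] [Finite H]
variable (m : ℕ) (a : G) (b : H) (ha : a ≠ 1) (hb : b ≠ 1)

lemma pow_ne_pow_top {b : H} (j : ℕ) (h1 : 0 < j) (h2 : j < orderOf b - 1) :
    b ^ j ≠ b ^ (orderOf b - 1) := by
  intro h
  have hq : 2 ≤ orderOf b := by omega
  have hsum : b ^ (orderOf b - 1) = b ^ j * b ^ (orderOf b - 1 - j) := by
    rw [← pow_add]; congr 1; omega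
  have : b ^ (orderOf b - 1 - j) = 1 :=
    mul_eq_left.mp (h.trans hsum).symm
  exact pow_ne_one_of_lt _ (by omega) (by omega) this

lemma gam_inl_one (hq3 : 3 ≤ orderOf b) (k : ZMod m) :
    gam m a b ha hb (Sum.inl (k, (1:G))) = Sum.inr (k, b) := by
  rw [gam_apply, phi_symm_inl_one, actHM_inl, mul_one]
  have h2 : b ≠ b ^ (orderOf b - 1) := by
    simpa using pow_ne_pow_top (b := b) 1 one_pos (by omega)
  rw [phi_inl_mid _ _ _ _ _ _ _ hb h2, actG_inr]

lemma gam_inl_one_two (hq2 : orderOf b = 2) (k : ZMod m) :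
    gam m a b ha hb (Sum.inl (k, (1:G))) = Sum.inl (k + 1, a ^ 2) := by
  rw [gam_apply, phi_symm_inl_one, actHM_inl, mul_one]
  have hbt : (Sum.inl (k, b) : MM m G H) = Sum.inl (k, b ^ (orderOf b - 1)) := by
    rw [hq2]; simp
  rw [hbt, phi_inl_top, actG_inl, ← sq]

lemma gam_inr_mid (k : ZMod m) (j : ℕ) (h1 : 1 ≤ j) (h2 : j + 1 ≤ orderOf b - 2) :
    gam m a b ha hb (Sum.inr (k, b ^ j)) = Sum.inr (k, b ^ (j + 1)) := by
  have hq : 2 ≤ orderOf b := two_le_orderOf hb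
  rw [gam_apply,
    phi_symm_inr_mid _ _ _ _ _ _ _ (pow_ne_one_of_lt _ (by omega) (by omega))
      (pow_ne_pow_top _ (by omega) (by omega)),
    actHM_inl, ← pow_succ',
    phi_inl_mid _ _ _ _ _ _ _ (pow_ne_one_of_lt _ (by omega) (by omega))
      (pow_ne_pow_top _ (by omega) (by omega)),
    actG_inr]

lemma gam_inr_last (hq3 : 3 ≤ orderOf b) (k : ZMod m) :
    gam m a b ha hb (Sum.inr (k, b ^ (orderOf b - 2))) = Sum.inl (k + 1, a ^ 2) := by
  rw [gam_apply,
    phi_symm_inr_mid _ _ _ _ _ _ _ (pow_ne_one_of_lt _ (by omega) (by omega))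
      (pow_ne_pow_top _ (by omega) (by omega)),
    actHM_inl, ← pow_succ', show orderOf b - 2 + 1 = orderOf b - 1 by omega,
    phi_inl_top, actG_inl, ← sq]

lemma pow_ne_self {a : G} (ha : a ≠ 1) (i : ℕ) (h1 : 2 ≤ i) (h2 : i ≤ orderOf a - 1) :
    a ^ i ≠ a := by
  intro h
  have : a ^ i = a * a ^ (i - 1) := by
    rw [← pow_succ']; congr 1; omega
  rw [this] at h
  have : a ^ (i - 1) = 1 := by
    have := mul_left_cancel (a := a) (by simpa using h)
    simpa using this
  exact pow_ne_one_of_lt _ (by omega) (by omega) this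

lemma gam_inl_pow (k : ZMod m) (i : ℕ) (h1 : 2 ≤ i) (h2 : i ≤ orderOf a - 1) :
    gam m a b ha hb (Sum.inl (k, a ^ i)) = Sum.inl (k, a ^ (i + 1)) := by
  have hne1 : a ^ i ≠ 1 := pow_ne_one_of_lt _ (by omega) (by omega)
  have hnea : a ^ i ≠ a := pow_ne_self ha i h1 h2
  rw [gam_apply, phi_symm_inl_mid _ _ _ _ _ _ _ hne1 hnea, actHM_inr,
    phi_inr_mid _ _ _ _ _ _ _ hne1 hnea, actG_inl, ← pow_succ']

end Chunk2

namespace Chunk3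
open CoprodNotRep Chunk2 Equiv

variable {G H : Type} [Group G] [Group H] [Finite G] [Finite H]
variable (m : ℕ) (a : G) (b : H) (ha : a ≠ 1) (hb : b ≠ 1)

lemma phaseA (k : ZMod m) :
    ((gam m a b ha hb) ^ (orderOf b - 1)) (Sum.inl (k, (1:G))) = Sum.inl (k + 1, a ^ 2) := by
  have hq : 2 ≤ orderOf b := two_le_orderOf hb
  rcases eq_or_lt_of_le hq with h2 | h3
  · rw [← h2]
    simpa using gam_inl_one_two m a b ha hb h2.symm k
  · have hq3 : 3 ≤ orderOf b := h3
    have climb : ∀ j, 1 ≤ j → j ≤ orderOf b - 2 →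
        ((gam m a b ha hb) ^ j) (Sum.inl (k, (1:G))) = Sum.inr (k, b ^ j) := by
      intro j hj1
      induction j, hj1 using Nat.le_induction with
      | base => intro _; simpa using gam_inl_one m a b ha hb hq3 k
      | succ j hj ih =>
        intro hj2
        rw [pow_succ', Perm.mul_apply, ih (by omega), gam_inr_mid m a b ha hb k j hj (by omega)]
    rw [show orderOf b - 1 = (orderOf b - 2) + 1 by omega, pow_succ', Perm.mul_apply,
      climb (orderOf b - 2) (by omega) le_rfl, gam_inr_last m a b ha hb hq3 k]

lemma phaseB (k : ZMod m) :
    ((gam m a b ha hb) ^ (orderOf a - 2)) (Sum.inl (k, a ^ 2)) = Sum.inl (k, (1:G)) := by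
  have hp : 2 ≤ orderOf a := two_le_orderOf ha
  have climb : ∀ i, 2 ≤ i → i ≤ orderOf a →
      ((gam m a b ha hb) ^ (i - 2)) (Sum.inl (k, a ^ 2)) = Sum.inl (k, a ^ i) := by
    intro i hi1
    induction i, hi1 using Nat.le_induction with
    | base => intro _; simp
    | succ i hi ih =>
      intro hi2
      rw [show i + 1 - 2 = (i - 2) + 1 by omega, pow_succ', Perm.mul_apply, ih (by omega),
        gam_inl_pow m a b ha hb k i hi (by omega)]
  have := climb (orderOf a) hp le_rfl
  rwa [pow_orderOf_eq_one] at this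

lemma loop (k : ZMod m) :
    ((gam m a b ha hb) ^ ((orderOf a - 2) + (orderOf b - 1))) (Sum.inl (k, (1:G)))
      = Sum.inl (k + 1, (1:G)) := by
  rw [pow_add, Perm.mul_apply, phaseA m a b ha hb k, phaseB m a b ha hb (k + 1)]

lemma iter (t : ℕ) :
    ((gam m a b ha hb) ^ (((orderOf a - 2) + (orderOf b - 1)) * t)) (Sum.inl (0, (1:G)))
      = Sum.inl ((t : ZMod m), (1:G)) := by
  induction t with
  | zero => simp
  | succ t ih =>
    rw [show ((orderOf a - 2) + (orderOf b - 1)) * (t + 1)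
        = ((orderOf a - 2) + (orderOf b - 1)) + ((orderOf a - 2) + (orderOf b - 1)) * t by ring,
      pow_add, Perm.mul_apply, ih, loop m a b ha hb]
    push_cast
    ring_nf

lemma key [NeZero m] (n : ℕ) (hn : (gam m a b ha hb) ^ n = 1) : m ∣ n := by
  have h1 : (gam m a b ha hb) ^ (((orderOf a - 2) + (orderOf b - 1)) * n) = 1 := by
    rw [mul_comm, pow_mul, hn, one_pow]
  have h2 := iter m a b ha hb n
  rw [h1] at h2
  simp only [Perm.one_apply, Sum.inl.injEq, Prod.mk.injEq] at h2
  have : ((n : ℕ) : ZMod m) = 0 := h2.1.symm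
  exact (ZMod.natCast_eq_zero_iff n m).mp this

end Chunk3

/-- For non-trivial finite groups `G` and `H`, the binary coproduct of `G` and `H`
is not representable in the category of finite groups. -/
theorem coprod_not_representable_in_finite_groups
    (G H : Type) [Group G] [Group H] [Finite G] [Finite H]
    [Nontrivial G] [Nontrivial H] :
    ¬ ∃ (F : Type) (_ : Group F) (_ : Finite F) (ιG : G →* F) (ιH : H →* F),
        ∀ (T : Type) [Group T] [Finite T] (fG : G →* T) (fH : H →* T),
          ∃! f : F →* T, f.comp ιG = fG ∧ f.comp ιH = fH := by
  rintro ⟨F, _, _, ιG, ιH, hU⟩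
  obtain ⟨a, ha⟩ := exists_ne (1 : G)
  obtain ⟨b, hb⟩ := exists_ne (1 : H)
  have hnpos : 0 < Nat.card F := Nat.card_pos
  set n := Nat.card F with hn
  set m := n + 1 with hm
  haveI : NeZero m := ⟨by omega⟩
  obtain ⟨f, ⟨h1, h2⟩, -⟩ := hU (Equiv.Perm (CoprodNotRep.XX m G H))
    (CoprodNotRep.actG m) (CoprodNotRep.actH m a b ha hb)
  have e1 : f (ιG a) = CoprodNotRep.actG m a := DFunLike.congr_fun h1 a
  have e2 : f (ιH b) = CoprodNotRep.actH m a b ha hb b := DFunLike.congr_fun h2 b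
  have hγ : CoprodNotRep.gam m a b ha hb = f (ιG a * ιH b) := by
    rw [map_mul, e1, e2, CoprodNotRep.gam]
  have hpow : (CoprodNotRep.gam m a b ha hb) ^ n = 1 := by
    rw [hγ, ← map_pow, hn, pow_card_eq_one', map_one]
  have hdvd : m ∣ n := Chunk3.key m a b ha hb n hpow
  have := Nat.le_of_dvd hnpos hdvd
  omega
end

section
/- Let G and H be non-trivial finite groups, and let g ∈ G and h ∈ H be non-identity elements. Then for every natural number m ≥ 1 there exist a finite group T and a group homomorphism q : G ∗ H → T such that the order of q(gh) is strictly greater than m, where gh denotes the product in G ∗ H of the images of g and h under the canonical inclusions. -/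
open Monoid

namespace FPAux

variable {G H : Type} [Group G] [Group H]

open Classical in
noncomputable def phi (H : Type) [Group H] (k : ℕ) : G →* Equiv.Perm (ZMod k × (G ⊕ H)) where
  toFun g' := Equiv.prodCongr (Equiv.refl _) (Equiv.sumCongr (Equiv.mulLeft g') (Equiv.refl H))
  map_one' := by ext ⟨j, x | y⟩ <;> simp
  map_mul' a b := by ext ⟨j, x | y⟩ <;> simp [mul_assoc]

open Classical in
noncomputable def rho (G : Type) [Group G] (k : ℕ) : H →* Equiv.Perm (ZMod k × (G ⊕ H)) where
  toFun h' := Equiv.prodCongr (Equiv.refl _) (Equiv.sumCongr (Equiv.refl G) (Equiv.mulLeft h'))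
  map_one' := by ext ⟨j, x | y⟩ <;> simp
  map_mul' a b := by ext ⟨j, x | y⟩ <;> simp [mul_assoc]

open Classical in
noncomputable def eFun (g : G) (h : H) (k : ℕ) : ZMod k × (G ⊕ H) → ZMod k × (G ⊕ H)
  | (j, Sum.inl x) =>
      if x = g⁻¹ then (j, Sum.inr 1) else if x = 1 then (j - 1, Sum.inr h) else (j, Sum.inl x)
  | (j, Sum.inr y) =>
      if y = 1 then (j, Sum.inl g⁻¹) else if y = h then (j + 1, Sum.inl 1) else (j, Sum.inr y)

lemma eFun_invol {g : G} {h : H} (hg : g ≠ 1) (hh : h ≠ 1) (k : ℕ) :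
    ∀ x, eFun g h k (eFun g h k x) = x := by
  classical
  rintro ⟨j, x | y⟩
  · by_cases h1 : x = g⁻¹
    · subst h1; simp [eFun, hh]
    · by_cases h2 : x = 1
      · subst h2
        have : g⁻¹ ≠ 1 := inv_ne_one.mpr hg
        simp [eFun, h1, hh, Ne.symm this]
      · simp [eFun, h1, h2]
  · by_cases h1 : y = 1
    · subst h1; simp [eFun]
    · by_cases h2 : y = h
      · subst h2
        have : (1 : G) ≠ g⁻¹ := Ne.symm (inv_ne_one.mpr hg)
        simp [eFun, h1, this]
      · simp [eFun, h1, h2]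

noncomputable def eP {g : G} {h : H} (hg : g ≠ 1) (hh : h ≠ 1) (k : ℕ) :
    Equiv.Perm (ZMod k × (G ⊕ H)) :=
  ⟨eFun g h k, eFun g h k, eFun_invol hg hh k, eFun_invol hg hh k⟩

noncomputable def psi {g : G} {h : H} (hg : g ≠ 1) (hh : h ≠ 1) (k : ℕ) :
    H →* Equiv.Perm (ZMod k × (G ⊕ H)) :=
  ((MulAut.conj (eP hg hh k)).toMonoidHom).comp (rho G k)

lemma psi_apply {g : G} {h : H} (hg : g ≠ 1) (hh : h ≠ 1) (k : ℕ) (h' : H)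
    (x : ZMod k × (G ⊕ H)) :
    psi hg hh k h' x = eFun g h k (rho G k h' (eFun g h k x)) := rfl

variable {g : G} {h : H} (hg : g ≠ 1) (hh : h ≠ 1) (k : ℕ)

noncomputable def cc : Equiv.Perm (ZMod k × (G ⊕ H)) := phi H k g * psi hg hh k h

lemma cc_apply (x : ZMod k × (G ⊕ H)) :
    cc hg hh k x = phi H k g (eFun g h k (rho G k h (eFun g h k x))) := rfl

lemma phi_apply_inl (j : ZMod k) (x : G) : phi H k g (j, Sum.inl x) = (j, Sum.inl (g * x)) := rfl
lemma phi_apply_inr (j : ZMod k) (y : H) : phi H k g (j, Sum.inr y) = (j, Sum.inr y) := rfl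
lemma rho_apply_inl (j : ZMod k) (x : G) : rho G k h (j, Sum.inl x) = (j, Sum.inl x) := rfl
lemma rho_apply_inr (j : ZMod k) (y : H) : rho G k h (j, Sum.inr y) = (j, Sum.inr (h * y)) := rfl

-- step on (j, inl 1), case h*h = 1
lemma cc_inl_one_sq (hq2 : h * h = 1) (j : ZMod k) :
    cc hg hh k (j, Sum.inl 1) = (j - 1, Sum.inl 1) := by
  classical
  have hgi : g⁻¹ ≠ 1 := inv_ne_one.mpr hg
  rw [cc_apply]
  simp [eFun, rho_apply_inr, phi_apply_inl, Ne.symm hgi, hh, hq2]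

-- step on (j, inl 1), case h*h ≠ 1
lemma cc_inl_one (hq2 : h * h ≠ 1) (j : ZMod k) :
    cc hg hh k (j, Sum.inl 1) = (j - 1, Sum.inr (h * h)) := by
  classical
  have hgi : g⁻¹ ≠ 1 := inv_ne_one.mpr hg
  have hne : h * h ≠ h := by
    intro e; exact hh (by simpa using mul_right_cancel (e.trans (one_mul h).symm))
  rw [cc_apply]
  simp [eFun, rho_apply_inr, phi_apply_inr, Ne.symm hgi, hh, hq2, hne]

-- step on (j, inr y), y ∉ {1,h}, h*y ≠ 1
lemma cc_inr (y : H) (h1 : y ≠ 1) (h2 : y ≠ h) (h3 : h * y ≠ 1) (j : ZMod k) :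
    cc hg hh k (j, Sum.inr y) = (j, Sum.inr (h * y)) := by
  classical
  have h4 : h * y ≠ h := by
    intro e; exact h1 (by simpa using mul_left_cancel (e.trans (mul_one h).symm))
  rw [cc_apply]
  simp [eFun, h1, h2, h3, h4, rho_apply_inr, phi_apply_inr]

-- step on (j, inr y), y ∉ {1,h}, h*y = 1
lemma cc_inr_last (y : H) (h1 : y ≠ 1) (h2 : y ≠ h) (h3 : h * y = 1) (j : ZMod k) :
    cc hg hh k (j, Sum.inr y) = (j, Sum.inl 1) := by
  classical
  rw [cc_apply]
  simp [eFun, h1, h2, h3, rho_apply_inr, phi_apply_inl]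

end FPAux

namespace FPAux
variable {G H : Type} [Group G] [Group H] {g : G} {h : H}
  (hg : g ≠ 1) (hh : h ≠ 1) (k : ℕ) [Finite H]

lemma pow_ne_one_of_lt {s : ℕ} (hs0 : 0 < s) (hs : s < orderOf h) : h ^ s ≠ 1 := by
  intro e
  have := Nat.le_of_dvd hs0 (orderOf_dvd_of_pow_eq_one e)
  omega

lemma claimA (j : ZMod k) : ∀ i : ℕ, i + 3 ≤ orderOf h →
    ((cc hg hh k) ^ (i + 1)) (j, Sum.inl 1) = (j - 1, Sum.inr (h ^ (i + 2))) := by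
  intro i
  induction i with
  | zero =>
    intro hq
    have : h ^ 2 ≠ 1 := pow_ne_one_of_lt (by norm_num) (by omega)
    rw [pow_one]
    rw [cc_inl_one hg hh k (by simpa [pow_two] using this) j]
    norm_num [pow_two]
  | succ i ih =>
    intro hq
    have h1 : (h : H) ^ (i + 2) ≠ 1 := pow_ne_one_of_lt (by omega) (by omega)
    have h2 : (h : H) ^ (i + 2) ≠ h := by
      intro e
      have : h ^ (i + 1) = 1 := by
        have := mul_right_cancel (a := h ^ (i+1)) (b := h) (c := 1)
        apply this
        rw [one_mul, ← pow_succ]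
        exact e
      exact pow_ne_one_of_lt (by omega) (by omega) this
    have h3 : h * h ^ (i + 2) ≠ 1 := by
      rw [← pow_succ']
      exact pow_ne_one_of_lt (by omega) (by omega)
    rw [pow_succ']
    rw [Equiv.Perm.mul_apply, ih (by omega)]
    rw [cc_inr hg hh k _ h1 h2 h3]
    rw [← pow_succ']

lemma claimB (j : ZMod k) :
    ((cc hg hh k) ^ (orderOf h - 1)) (j, Sum.inl 1) = (j - 1, Sum.inl 1) := by
  have hq0 : 0 < orderOf h := orderOf_pos h
  have hq1 : orderOf h ≠ 1 := by simpa using orderOf_eq_one_iff.not.mpr hh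
  have hq2 : 2 ≤ orderOf h := by omega
  rcases eq_or_lt_of_le hq2 with hq | hq
  · have : orderOf h - 1 = 1 := by omega
    rw [this, pow_one]
    have : h * h = 1 := by
      have := pow_orderOf_eq_one h
      rw [← hq] at this
      simpa [pow_two] using this
    exact cc_inl_one_sq hg hh k this j
  · -- orderOf h ≥ 3
    have e1 : orderOf h - 1 = (orderOf h - 3 + 1) + 1 := by omega
    rw [e1, pow_succ']
    rw [Equiv.Perm.mul_apply, claimA hg hh k j (orderOf h - 3) (by omega)]
    have h1 : (h : H) ^ (orderOf h - 3 + 2) ≠ 1 := pow_ne_one_of_lt (by omega) (by omega)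
    have h2 : (h : H) ^ (orderOf h - 3 + 2) ≠ h := by
      intro e
      have : h ^ (orderOf h - 3 + 1) = 1 := by
        apply mul_right_cancel (b := h)
        rw [one_mul, ← pow_succ]
        exact e
      exact pow_ne_one_of_lt (by omega) (by omega) this
    have h3 : h * h ^ (orderOf h - 3 + 2) = 1 := by
      rw [← pow_succ']
      have : orderOf h - 3 + 2 + 1 = orderOf h := by omega
      rw [this]
      exact pow_orderOf_eq_one h
    rw [cc_inr_last hg hh k _ h1 h2 h3]

lemma claimC : ∀ n : ℕ,
    ((cc hg hh k) ^ ((orderOf h - 1) * n)) ((0 : ZMod k), Sum.inl 1)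
      = (-(n : ZMod k), Sum.inl 1) := by
  intro n
  induction n with
  | zero => simp
  | succ n ih =>
    have e : (orderOf h - 1) * (n + 1) = (orderOf h - 1) + (orderOf h - 1) * n := by ring
    rw [e, pow_add, Equiv.Perm.mul_apply, ih, claimB hg hh k]
    push_cast
    ring_nf

end FPAux


/-- For non-trivial finite groups `G` and `H`, non-identity elements `g ∈ G`, `h ∈ H`,
and any `m ≥ 1`, there is a finite group `T` and a homomorphism `q : G ∗ H →* T`
such that the order of `q (gh)` exceeds `m`. -/
theorem exists_finite_quotient_order_gt
    (G H : Type) [Group G] [Group H] [Finite G] [Finite H]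
    (g : G) (h : H) (hg : g ≠ 1) (hh : h ≠ 1) (m : ℕ) (hm : 1 ≤ m) :
    ∃ (T : Type) (_ : Group T) (_ : Finite T) (q : Coprod G H →* T),
      m < orderOf (q (Coprod.inl g * Coprod.inr h)) := by
  classical
  refine ⟨Equiv.Perm (ZMod (m + 1) × (G ⊕ H)), inferInstance, inferInstance,
    Coprod.lift (FPAux.phi H (m + 1)) (FPAux.psi hg hh (m + 1)), ?_⟩
  have hq : Coprod.lift (FPAux.phi H (m + 1)) (FPAux.psi hg hh (m + 1))
      (Coprod.inl g * Coprod.inr h) = FPAux.cc hg hh (m + 1) := by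
    rw [map_mul, Coprod.lift_apply_inl, Coprod.lift_apply_inr]
    rfl
  rw [hq]
  by_contra hle
  push_neg at hle
  set c := FPAux.cc (G := G) (H := H) hg hh (m + 1) with hc
  set d := orderOf c with hd
  have hd0 : 0 < d := orderOf_pos c
  set Q := orderOf h with hQ
  obtain ⟨i1, i2, hne, heq⟩ := Fintype.exists_ne_map_eq_of_card_lt
    (fun i : Fin (m + 1) => (⟨((Q - 1) * i) % d, Nat.mod_lt _ hd0⟩ : Fin d))
    (by simpa using by omega)
  have hpow : c ^ ((Q - 1) * (i1 : ℕ)) = c ^ ((Q - 1) * (i2 : ℕ)) := by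
    rw [← pow_mod_orderOf, ← hd]
    conv_rhs => rw [← pow_mod_orderOf, ← hd]
    have : ((Q - 1) * (i1 : ℕ)) % d = ((Q - 1) * (i2 : ℕ)) % d := congrArg Fin.val heq
    rw [this]
  have h1 := FPAux.claimC hg hh (m + 1) (i1 : ℕ)
  have h2 := FPAux.claimC hg hh (m + 1) (i2 : ℕ)
  rw [← hQ] at h1 h2
  rw [hpow, h2] at h1
  have hneg : ((i2 : ℕ) : ZMod (m + 1)) = ((i1 : ℕ) : ZMod (m + 1)) := by
    have := (Prod.mk.injEq _ _ _ _).mp h1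
    exact neg_injective this.1
  apply hne
  have v1 := ZMod.val_cast_of_lt (a := (i1 : ℕ)) (n := m + 1) i1.isLt
  have v2 := ZMod.val_cast_of_lt (a := (i2 : ℕ)) (n := m + 1) i2.isLt
  apply Fin.ext
  rw [← v1, ← v2, hneg]
end

section
/- Let G and H be finite groups. Then the free product G ∗ H is residually finite: for every non-identity element w ∈ G ∗ H there exists a finite group T and a group homomorphism q : G ∗ H → T such that q(w) ≠ 1. -/
open Monoid

namespace CoprodResFin

open Monoid.CoprodI Monoid.CoprodI.Word
open scoped Classical
set_option linter.unusedSectionVars false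

variable {ι : Type} [DecidableEq ι] (M : ι → Type) [∀ i, Group (M i)] [∀ i, DecidableEq (M i)] (n : ℕ)

/-- The finite set of reduced words of length at most `n`. -/
abbrev X : Type := {w : Word M // w.toList.length ≤ n}

variable {M}

/-- The set of words on which `M i` genuinely acts (staying within length `n`). -/
def Ok (n : ℕ) (i : ι) (w : Word M) : Prop :=
  w.toList.length < n ∨ fstIdx w = some i

lemma len_rcons_eq {i : ι} (p : Pair M i) (h : p.head = 1) :
    (rcons p).toList.length = p.tail.toList.length := by
  simp [rcons, h]

lemma len_rcons_ne {i : ι} (p : Pair M i) (h : p.head ≠ 1) :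
    (rcons p).toList.length = p.tail.toList.length + 1 := by
  simp [rcons, h, cons]

lemma fstIdx_rcons_ne {i : ι} (p : Pair M i) (h : p.head ≠ 1) :
    fstIdx (rcons p) = some i := by
  simp [rcons, h]

lemma equivPair_cons {i : ι} (m : M i) (w : Word M) (hmw : w.fstIdx ≠ some i) (h1 : m ≠ 1) :
    equivPair i (cons m w hmw h1) = ⟨m, w, hmw⟩ := by
  rw [cons_eq_smul, equivPair_smul_same, equivPair_eq_of_fstIdx_ne hmw]
  simp

lemma equivPair_spec {i : ι} (w : Word M) (hw : fstIdx w = some i) :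
    (equivPair i w).tail.toList.length + 1 = w.toList.length ∧ (equivPair i w).head ≠ 1 := by
  induction w using consRecOn with
  | empty => simp [fstIdx] at hw
  | cons j m ls h1 h2 ih =>
    have hj : j = i := by
      simpa [fstIdx] using hw
    subst hj
    rw [equivPair_cons m ls h1 h2]
    exact ⟨by simp [cons], h2⟩

lemma smul_mem {n : ℕ} {i : ι} (m : M i) (w : Word M) (hle : w.toList.length ≤ n)
    (hok : Ok n i w) :
    (of m • w).toList.length ≤ n ∧ Ok n i (of m • w) := by
  rw [of_smul_def]
  set p : Pair M i := { equivPair i w with head := m * (equivPair i w).head } with hp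
  have hcase : p.tail.toList.length + 1 = w.toList.length ∨
      (p.tail.toList.length = w.toList.length ∧ w.toList.length < n) := by
    by_cases hw : fstIdx w = some i
    · exact Or.inl ((equivPair_spec w hw).1)
    · refine Or.inr ⟨?_, hok.resolve_right hw⟩
      show (equivPair i w).tail.toList.length = _
      rw [equivPair_eq_of_fstIdx_ne hw]
  have key : p.tail.toList.length + 1 ≤ n := by omega
  by_cases h1 : p.head = 1
  · exact ⟨by rw [len_rcons_eq p h1]; omega,
      Or.inl (by rw [len_rcons_eq p h1]; omega)⟩
  · exact ⟨by rw [len_rcons_ne p h1]; omega,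
      Or.inr (fstIdx_rcons_ne p h1)⟩

/-- The action of `m : M i` on `X M n`: act genuinely on `Ok` words, fix the rest. -/
noncomputable def act (n : ℕ) (i : ι) (m : M i) (x : X M n) : X M n :=
  if h : Ok n i x.1 then ⟨of m • x.1, (smul_mem m x.1 x.2 h).1⟩ else x

lemma act_one {n : ℕ} (i : ι) (x : X M n) : act n i (1 : M i) x = x := by
  rw [act]
  split
  · exact Subtype.ext (by simp)
  · rfl

lemma act_mul {n : ℕ} (i : ι) (m m' : M i) (x : X M n) :
    act n i (m * m') x = act n i m (act n i m' x) := by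
  by_cases h : Ok n i x.1
  · have h2 : Ok n i (of m' • x.1) := (smul_mem m' x.1 x.2 h).2
    simp only [act, dif_pos h, dif_pos h2]
    refine Subtype.ext ?_
    show of (m * m') • x.1 = of m • (of m' • x.1)
    rw [map_mul, mul_smul]
  · simp only [act, dif_neg h]

/-- The permutation representation of `M i` on `X M n`. -/
noncomputable def rep (n : ℕ) (i : ι) : M i →* Equiv.Perm (X M n) where
  toFun m :=
    { toFun := act n i m
      invFun := act n i m⁻¹
      left_inv := fun x => by rw [← act_mul, inv_mul_cancel, act_one]
      right_inv := fun x => by rw [← act_mul, mul_inv_cancel, act_one] }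
  map_one' := Equiv.ext fun x => act_one i x
  map_mul' m m' := Equiv.ext fun x => act_mul i m m' x

/-- The resulting homomorphism from the free product. -/
noncomputable def rep' (n : ℕ) : CoprodI M →* Equiv.Perm (X M n) := CoprodI.lift (rep n)

/-- The empty word as an element of `X M n`. -/
noncomputable def emp {n : ℕ} : X M n := ⟨Word.empty, by simp⟩

lemma rep'_prod {n : ℕ} (v : Word M) (hv : v.toList.length ≤ n) :
    rep' n (Word.prod v) emp = ⟨v, hv⟩ := by
  induction v using consRecOn with
  | empty => simp [emp, prod_empty]
  | cons j m ls h1 h2 ih =>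
    have hlen : ls.toList.length < n := by
      simp only [cons] at hv
      simp only [List.length_cons] at hv
      omega
    rw [prod_cons, map_mul]
    simp only [Equiv.Perm.mul_apply]
    rw [ih (le_of_lt hlen)]
    rw [rep', CoprodI.lift_of]
    show act n j m ⟨ls, le_of_lt hlen⟩ = _
    have hok : Ok n j ((⟨ls, le_of_lt hlen⟩ : X M n).1) := Or.inl hlen
    rw [act, dif_pos hok]
    exact Subtype.ext (show of m • ls = cons m ls h1 h2 from cons_eq_smul.symm)

lemma X_finite {n : ℕ} [Finite ι] [∀ i, Finite (M i)] : Finite (X M n) := by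
  have : Finite (Σ i, M i) := by infer_instance
  have hf : {l : List (Σ i, M i) | l.length ≤ n}.Finite := List.finite_length_le _ n
  have := hf.to_subtype
  exact Finite.of_injective (fun x => (⟨x.1.toList, x.2⟩ : {l : List (Σ i, M i) | l.length ≤ n}))
    (fun x y h => Subtype.ext (Word.ext (by simpa using h)))

theorem coprodI_res (w : CoprodI M) (hw : w ≠ 1) [Finite ι] [∀ i, Finite (M i)] :
    ∃ (T : Type) (_ : Group T) (_ : Finite T) (q : CoprodI M →* T), q w ≠ 1 := by
  set n := (Word.equiv w).toList.length with hn
  have : Finite (X M n) := X_finite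
  refine ⟨Equiv.Perm (X M n), inferInstance, inferInstance, rep' n, ?_⟩
  intro h
  have hprod : Word.prod (Word.equiv w) = w := Word.equiv.symm_apply_apply w
  have := rep'_prod (n := n) (Word.equiv w) le_rfl
  rw [hprod, h] at this
  have hne : Word.equiv w ≠ Word.empty := by
    intro he
    apply hw
    rw [← hprod, he, prod_empty]
  apply hne
  have : (emp : X M n).1 = Word.equiv w := congrArg Subtype.val this
  exact this.symm

end CoprodResFin

/-- The free product of two finite groups is residually finite. -/
theorem coprod_residually_finite
    (G H : Type) [Group G] [Group H] [Finite G] [Finite H]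
    (w : Coprod G H) (hw : w ≠ 1) :
    ∃ (T : Type) (_ : Group T) (_ : Finite T) (q : Coprod G H →* T), q w ≠ 1 := by
  classical
  let M : Bool → Type := fun b => bif b then G else H
  letI instG : ∀ b, Group (M b) := by rintro (_ | _) <;> assumption
  letI instF : ∀ b, Finite (M b) := by rintro (_ | _) <;> assumption
  let φ : Coprod G H →* CoprodI M :=
    Coprod.lift (CoprodI.of (M := M) (i := true)) (CoprodI.of (M := M) (i := false))
  let ψf : ∀ b, M b →* Coprod G H :=
    fun b => Bool.rec (Coprod.inr (M := G)) (Coprod.inl (N := H)) b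
  let ψ : CoprodI M →* Coprod G H := CoprodI.lift ψf
  have h1 : ∀ (b : Bool) (m : M b), ψ (CoprodI.of m) = ψf b m :=
    fun b m => CoprodI.lift_of (fi := ψf) (m := m)
  have hψφ : ∀ x, ψ (φ x) = x := by
    intro x
    have : ψ.comp φ = MonoidHom.id _ := by
      apply Coprod.hom_ext
      · ext g
        exact h1 true g
      · ext g
        exact h1 false g
    calc ψ (φ x) = (ψ.comp φ) x := rfl
    _ = x := by rw [this]; rfl
  have hφw : φ w ≠ 1 := fun h => hw (by rw [← hψφ w, h, map_one])
  obtain ⟨T, _, _, q, hq⟩ := CoprodResFin.coprodI_res (M := M) (φ w) hφw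
  exact ⟨T, ‹_›, ‹_›, q.comp φ, hq⟩
end

section
/- Let G and H be finite groups. For every non-identity element w of the free product G ∗ H, there exists a normal subgroup K of G ∗ H of finite index such that w ∉ K. -/
open Monoid

namespace ResidualAux

open Monoid.CoprodI Monoid.CoprodI.Word

variable {ι : Type} [DecidableEq ι] {M : ι → Type} [∀ i, Group (M i)] [∀ i, DecidableEq (M i)]

theorem smul_of_fstIdx_ne {i : ι} (m : M i) (w : Word M) (h : w.fstIdx ≠ some i) :
    of m • w = if hm : m = 1 then w else cons m w h hm := by
  split_ifs with hm
  · subst hm; rw [map_one, one_smul]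
  · exact cons_eq_smul.symm

theorem smul_cases (i : ι) (m : M i) (w : Word M) :
    of m • w = w ∨ (of m • w).fstIdx = some i ∨
      (of m • w).toList.length < w.toList.length := by
  induction w using consRecOn with
  | empty =>
      rw [smul_of_fstIdx_ne m empty (by simp [fstIdx])]
      split_ifs with hm
      · exact Or.inl rfl
      · exact Or.inr (Or.inl (fstIdx_cons _ _ _ _))
  | cons j m' w' h1 h2 _ =>
      rcases eq_or_ne i j with rfl | hij
      · have hx : of m • (cons m' w' h1 h2) = of (m * m') • w' := by
          rw [cons_eq_smul, ← mul_smul, ← map_mul]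
        rw [hx, smul_of_fstIdx_ne _ _ h1]
        split_ifs with hm
        · exact Or.inr (Or.inr (by simp [cons]))
        · exact Or.inr (Or.inl (fstIdx_cons _ _ _ _))
      · have hne : (cons m' w' h1 h2).fstIdx ≠ some i := by
          rw [fstIdx_cons]
          exact fun h => hij (Option.some.inj h).symm
        rw [smul_of_fstIdx_ne m _ hne]
        split_ifs with hm
        · exact Or.inl rfl
        · exact Or.inr (Or.inl (fstIdx_cons _ _ _ _))

theorem length_smul (i : ι) (m : M i) (w : Word M) :
    (of m • w).toList.length ≤ w.toList.length + 1 ∧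
      (w.fstIdx = some i → (of m • w).toList.length ≤ w.toList.length) := by
  induction w using consRecOn with
  | empty =>
      rw [smul_of_fstIdx_ne m empty (by simp [fstIdx])]
      constructor
      · split_ifs <;> simp [cons]
      · intro h; simp [fstIdx] at h
  | cons j m' w' h1 h2 _ =>
      rcases eq_or_ne i j with rfl | hij
      · have hx : of m • (cons m' w' h1 h2) = of (m * m') • w' := by
          rw [cons_eq_smul, ← mul_smul, ← map_mul]
        rw [hx, smul_of_fstIdx_ne _ _ h1]
        refine ?_
        split_ifs with hm <;> refine ⟨?_, fun _ => ?_⟩ <;> simp [cons] <;> omega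
      · have hne : (cons m' w' h1 h2).fstIdx ≠ some i := by
          rw [fstIdx_cons]
          exact fun h => hij (Option.some.inj h).symm
        rw [smul_of_fstIdx_ne m _ hne]
        constructor
        · split_ifs <;> simp [cons]
        · intro h
          exact absurd h hne


/-- The truncated action of a letter `m : M i` on a word. -/
def Fval (n : ℕ) (i : ι) (m : M i) (w : Word M) : Word M :=
  if w.toList.length = n ∧ w.fstIdx ≠ some i then w else of m • w

theorem Fval_le (n : ℕ) (i : ι) (m : M i) (w : Word M) (hw : w.toList.length ≤ n) :
    (Fval n i m w).toList.length ≤ n := by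
  rw [Fval]
  split_ifs with h
  · exact hw
  · rcases length_smul i m w with ⟨hle, hfst⟩
    push_neg at h
    by_cases he : w.toList.length = n
    · exact (hfst (h he)).trans (le_of_eq he)
    · omega

theorem Fval_one (n : ℕ) (i : ι) (w : Word M) : Fval n i 1 w = w := by
  rw [Fval]
  split_ifs with h
  · rfl
  · simp

theorem notC (n : ℕ) (i : ι) (m' : M i) (x : Word M) (hx : x.toList.length ≤ n)
    (h : ¬(x.toList.length = n ∧ x.fstIdx ≠ some i)) :
    ¬((of m' • x).toList.length = n ∧ (of m' • x).fstIdx ≠ some i) := by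
  rintro ⟨hlen, hfst⟩
  rcases smul_cases i m' x with heq | hsome | hlt
  · rw [heq] at hlen hfst
    exact h ⟨hlen, hfst⟩
  · exact hfst hsome
  · omega

theorem Fval_mul (n : ℕ) (i : ι) (m m' : M i) (w : Word M) (hw : w.toList.length ≤ n) :
    Fval n i m (Fval n i m' w) = Fval n i (m * m') w := by
  by_cases hC : w.toList.length = n ∧ w.fstIdx ≠ some i
  · have h3 : Fval n i m' w = w := if_pos hC
    have h4 : Fval n i (m * m') w = w := if_pos hC
    have h5 : Fval n i m w = w := if_pos hC
    rw [h3, h5, h4]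
  · have h2 := notC n i m' w hw hC
    have h3 : Fval n i m' w = of m' • w := if_neg hC
    have h4 : Fval n i m (of m' • w) = of m • (of m' • w) := if_neg h2
    have h5 : Fval n i (m * m') w = of (m * m') • w := if_neg hC
    rw [h3, h4, h5, ← mul_smul, ← map_mul]

/-- The truncated action as a map on the subtype of short words. -/
def F (n : ℕ) (i : ι) (m : M i) (x : {w : Word M // w.toList.length ≤ n}) :
    {w : Word M // w.toList.length ≤ n} :=
  ⟨Fval n i m x.1, Fval_le n i m x.1 x.2⟩

/-- The letterwise permutation homomorphisms on truncated words. -/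
def toPerm (n : ℕ) (i : ι) : M i →* Equiv.Perm {w : Word M // w.toList.length ≤ n} where
  toFun m :=
    { toFun := F n i m
      invFun := F n i m⁻¹
      left_inv := fun x => Subtype.ext <| by
        show Fval n i m⁻¹ (Fval n i m x.1) = x.1
        rw [Fval_mul n i m⁻¹ m x.1 x.2, inv_mul_cancel, Fval_one]
      right_inv := fun x => Subtype.ext <| by
        show Fval n i m (Fval n i m⁻¹ x.1) = x.1
        rw [Fval_mul n i m m⁻¹ x.1 x.2, mul_inv_cancel, Fval_one] }
  map_one' := Equiv.ext fun x => Subtype.ext (Fval_one n i x.1)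
  map_mul' m m' := Equiv.ext fun x =>
    Subtype.ext (Fval_mul n i m m' x.1 x.2).symm

theorem eval (n : ℕ) (w : Word M) :
    ∀ hw : w.toList.length ≤ n,
      (CoprodI.lift (toPerm n)) (prod w) ⟨empty, n.zero_le⟩ = ⟨w, hw⟩ := by
  induction w using consRecOn with
  | empty => intro hw; simp
  | cons i m w' h1 h2 ih =>
      intro hw
      have hlen : w'.toList.length + 1 ≤ n := by simpa [cons] using hw
      rw [prod_cons, map_mul, Equiv.Perm.mul_apply, ih (by omega), CoprodI.lift_of]
      refine Subtype.ext ?_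
      show Fval n i m w' = cons m w' h1 h2
      rw [Fval, if_neg (by rintro ⟨h, -⟩; omega)]
      exact cons_eq_smul.symm

theorem finite_X [Finite ι] [∀ i, Finite (M i)] (n : ℕ) :
    Finite {w : Word M // w.toList.length ≤ n} := by
  have : Finite {l : List (Σ i, M i) // l.length ≤ n} :=
    (List.finite_length_le _ n).to_subtype
  exact Finite.of_injective
    (fun x => (⟨x.1.toList, x.2⟩ : {l : List (Σ i, M i) // l.length ≤ n}))
    (fun x y h => Subtype.ext (Word.ext (congrArg Subtype.val h)))

theorem coprodI_exists [Finite ι] [∀ i, Finite (M i)] (x : CoprodI M) (hx : x ≠ 1) :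
    ∃ (n : ℕ) (f : CoprodI M →* Equiv.Perm {w : Word M // w.toList.length ≤ n}),
      f x ≠ 1 := by
  set w : Word M := Word.equiv x with hwdef
  refine ⟨w.toList.length, CoprodI.lift (toPerm w.toList.length), fun hone => ?_⟩
  have hx' : prod w = x := Word.equiv.symm_apply_apply x
  have := eval w.toList.length w le_rfl
  rw [hx', hone] at this
  have : (empty : Word M) = w := congrArg Subtype.val this
  apply hx
  have h1 : Word.equiv (1 : CoprodI M) = (empty : Word M) := by
    simp [Word.equiv, one_smul]
  exact Word.equiv.injective (by rw [h1, this])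

end ResidualAux

open ResidualAux in
/-- For finite groups `G`, `H` and any non-identity `w ∈ G ∗ H`, there is a
finite-index normal subgroup `K` of `G ∗ H` with `w ∉ K`. -/
theorem exists_finiteIndex_normal_not_mem
    (G H : Type) [Group G] [Group H] [Finite G] [Finite H]
    (w : Coprod G H) (hw : w ≠ 1) :
    ∃ K : Subgroup (Coprod G H), K.Normal ∧ K.FiniteIndex ∧ w ∉ K := by
  classical
  set M : Bool → Type := fun b => cond b G H with hM
  letI : ∀ b, Group (M b) := fun b => match b with
    | true => ‹Group G›
    | false => ‹Group H›
  haveI : ∀ b, Finite (M b) := fun b => match b with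
    | true => ‹Finite G›
    | false => ‹Finite H›
  letI : ∀ b, DecidableEq (M b) := fun b => Classical.decEq _
  let φ' : Coprod G H →* CoprodI M :=
    Coprod.lift (CoprodI.of (M := M) (i := true)) (CoprodI.of (M := M) (i := false))
  let ψ : CoprodI M →* Coprod G H :=
    CoprodI.lift (fun b => match b with
      | true => (Coprod.inl : G →* Coprod G H)
      | false => (Coprod.inr : H →* Coprod G H))
  have hcomp : ψ.comp φ' = MonoidHom.id _ := by
    apply Coprod.hom_ext <;> ext x <;>
      simp only [MonoidHom.comp_apply, MonoidHom.id_apply, Coprod.lift_apply_inl,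
        Coprod.lift_apply_inr, φ', ψ] <;>
      exact CoprodI.lift_of _ _
  have hinj : ∀ u, ψ (φ' u) = u := fun u => DFunLike.congr_fun hcomp u
  have hx : φ' w ≠ 1 := fun h => hw (by rw [← hinj w, h, map_one])
  obtain ⟨n, f, hf⟩ := @coprodI_exists Bool instDecidableEqBool M _ _ _ _ (φ' w) hx
  haveI : Finite {v : CoprodI.Word M // v.toList.length ≤ n} := @finite_X Bool instDecidableEqBool M _ _ _ _ n
  refine ⟨(f.comp φ').ker, inferInstance, Subgroup.finiteIndex_ker _, fun h => ?_⟩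
  rw [MonoidHom.mem_ker, MonoidHom.comp_apply] at h
  exact hf h
end

section
/- Let Γ be a group, n a positive integer, and suppose there is an injective group homomorphism ρ : Γ → GL_n(ℚ(t)) such that Γ is generated by a finite set S all of whose elements have finite order. Then Γ is residually finite: for every non-identity w ∈ Γ there exists a finite group T and a group homomorphism q : Γ → T with q(w) ≠ 1. -/
lemma my_isJacobsonRing_int : IsJacobsonRing ℤ := by
  rw [isJacobsonRing_iff_prime_eq]
  intro P hP
  rcases eq_or_ne P ⊥ with rfl | hne
  · refine eq_bot_iff.2 fun x hx => ?_
    rw [Ideal.mem_jacobson_bot] at hx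
    have h1 := hx 1
    have h2 := hx (-1)
    simp only [mul_one, mul_neg_one, Int.isUnit_iff] at h1 h2
    have hx0 : x = 0 := by omega
    simp [hx0]
  · exact Ideal.jacobson_eq_self_of_isMaximal (H := IsPrime.to_maximal_ideal hne)

/-- A field which is a finite module over `ℤ` is finite. -/
lemma my_finite_of_moduleFinite_int (F : Type*) [Field F] [Module.Finite ℤ F] :
    Finite F := by
  haveI : Algebra.IsIntegral ℤ F := Algebra.IsIntegral.of_finite ℤ F
  rcases CharP.char_is_prime_or_zero F (ringChar F) with hp | h0
  · haveI : Fact (Nat.Prime (ringChar F)) := ⟨hp⟩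
    haveI : CharP F (ringChar F) := ringChar.charP F
    letI : Algebra (ZMod (ringChar F)) F := (ZMod.castHom dvd_rfl F).toAlgebra
    haveI : IsScalarTower ℤ (ZMod (ringChar F)) F := ⟨fun x y z => by
      simp only [zsmul_eq_mul, Algebra.smul_def, RingHom.algebraMap_toAlgebra, map_mul,
        map_intCast, eq_intCast, mul_assoc]⟩
    haveI := Module.Finite.of_restrictScalars_finite ℤ (ZMod (ringChar F)) F
    exact Module.finite_of_finite (ZMod (ringChar F))
  · haveI : CharP F 0 := h0 ▸ ringChar.charP F
    haveI : CharZero F := CharP.charP_to_charZero F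
    have hinj : Function.Injective (algebraMap ℤ F) := fun p q hpq => by
      rw [eq_intCast, eq_intCast] at hpq
      exact_mod_cast hpq
    exact absurd (isField_of_isIntegral_of_isField hinj (Field.toIsField F))
      Int.not_isField

/-- The entrywise restriction of a matrix representation to a subalgebra containing
all entries. -/
def matEntryHom {Γ K R : Type*} [Group Γ] [Field K] [CommSemiring R] [Algebra R K] {n : ℕ}
    (ρ : Γ →* Matrix.GeneralLinearGroup (Fin n) K) (A : Subalgebra R K)
    (hG : ∀ g : Γ, ∀ i j, ((ρ g : Matrix (Fin n) (Fin n) K)) i j ∈ A) :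
    Γ →* Matrix (Fin n) (Fin n) A where
  toFun g := Matrix.of fun i j => (⟨(ρ g : Matrix (Fin n) (Fin n) K) i j, hG g i j⟩ : A)
  map_one' := by
    ext i j
    simp only [Matrix.of_apply, map_one, Units.val_one, Matrix.one_apply, apply_ite]
    split <;> simp
  map_mul' := fun a b => by
    ext i j
    simp only [Matrix.of_apply, map_mul, Units.val_mul, Matrix.mul_apply,
      AddSubmonoidClass.coe_finset_sum, MulMemClass.coe_mul]

@[simp] lemma matEntryHom_coe {Γ K R : Type*} [Group Γ] [Field K] [CommSemiring R] [Algebra R K] {n : ℕ}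
    (ρ : Γ →* Matrix.GeneralLinearGroup (Fin n) K) (A : Subalgebra R K)
    (hG : ∀ g : Γ, ∀ i j, ((ρ g : Matrix (Fin n) (Fin n) K)) i j ∈ A)
    (g : Γ) (i j : Fin n) :
    ((matEntryHom ρ A hG g i j : A) : K) = (ρ g : Matrix (Fin n) (Fin n) K) i j := rfl

set_option maxHeartbeats 1000000 in
set_option synthInstance.maxHeartbeats 400000 in
/-- A group with a faithful finite-dimensional representation over `ℚ(t)` that is
generated by a finite set of elements of finite order is residually finite. -/
theorem residually_finite_of_faithful_rep_ratFunc
    (Γ : Type) [Group Γ] (n : ℕ) (hn : 0 < n)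
    (ρ : Γ →* Matrix.GeneralLinearGroup (Fin n) (RatFunc ℚ))
    (hρ : Function.Injective ρ)
    (S : Finset Γ) (hS : Subgroup.closure (S : Set Γ) = ⊤)
    (hord : ∀ s ∈ S, IsOfFinOrder s)
    (w : Γ) (hw : w ≠ 1) :
    ∃ (T : Type) (_ : Group T) (_ : Finite T) (q : Γ →* T), q w ≠ 1 := by
  classical
  set K := RatFunc ℚ
  -- the set of entries of the generators and their inverses
  set E : Set K := ⋃ g ∈ ((S : Set Γ) ∪ (S : Set Γ)⁻¹),
      Set.range (fun p : Fin n × Fin n => ((ρ g : Matrix (Fin n) (Fin n) K)) p.1 p.2) with hE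
  have hEfin : E.Finite := by
    refine Set.Finite.biUnion ?_ fun g _ => Set.finite_range _
    exact (S.finite_toSet.union S.finite_toSet.inv)
  set A : Subalgebra ℤ K := Algebra.adjoin ℤ E with hA
  haveI hAft : Algebra.FiniteType ℤ A :=
    (Subalgebra.fg_iff_finiteType _).1 (Subalgebra.fg_def.2 ⟨E, hEfin, rfl⟩)
  -- all entries of all ρ g lie in A
  have hG : ∀ g : Γ, (∀ i j, ((ρ g : Matrix (Fin n) (Fin n) K)) i j ∈ A) ∧
      (∀ i j, (((ρ g)⁻¹ : Matrix.GeneralLinearGroup (Fin n) K) : Matrix (Fin n) (Fin n) K) i j ∈ A) := by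
    set G₀ : Subgroup Γ :=
      { carrier := {g | (∀ i j, ((ρ g : Matrix (Fin n) (Fin n) K)) i j ∈ A) ∧
          (∀ i j, (((ρ g)⁻¹ : Matrix.GeneralLinearGroup (Fin n) K) : Matrix (Fin n) (Fin n) K) i j ∈ A)}
        one_mem' := by
          constructor <;> intro i j <;>
            simp only [map_one, inv_one, Units.val_one, Matrix.one_apply] <;>
            split <;> first | exact one_mem A | exact zero_mem A
        mul_mem' := by
          rintro a b ⟨ha1, ha2⟩ ⟨hb1, hb2⟩
          constructor <;> intro i j
          · rw [map_mul]
            show (((ρ a) : Matrix (Fin n) (Fin n) K) * ((ρ b) : Matrix (Fin n) (Fin n) K)) i j ∈ A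
            rw [Matrix.mul_apply]
            exact Subalgebra.sum_mem _ fun k _ => mul_mem (ha1 i k) (hb1 k j)
          · rw [map_mul, mul_inv_rev]
            show ((((ρ b)⁻¹ : Matrix.GeneralLinearGroup (Fin n) K) : Matrix (Fin n) (Fin n) K)
              * (((ρ a)⁻¹ : Matrix.GeneralLinearGroup (Fin n) K) : Matrix (Fin n) (Fin n) K)) i j ∈ A
            rw [Matrix.mul_apply]
            exact Subalgebra.sum_mem _ fun k _ => mul_mem (hb2 i k) (ha2 k j)
        inv_mem' := by
          rintro a ⟨ha1, ha2⟩
          refine ⟨?_, ?_⟩ <;> intro i j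
          · rw [map_inv]; exact ha2 i j
          · rw [map_inv, inv_inv]; exact ha1 i j }
    have hsub : (S : Set Γ) ⊆ G₀ := by
      intro s hs
      constructor <;> intro i j
      · refine Algebra.subset_adjoin ?_
        exact Set.mem_biUnion (Set.mem_union_left _ hs) ⟨(i, j), rfl⟩
      · rw [← map_inv]
        refine Algebra.subset_adjoin ?_
        refine Set.mem_biUnion (Set.mem_union_right _ ?_) ⟨(i, j), rfl⟩
        exact Set.inv_mem_inv.2 (by simpa using hs)
    have : Subgroup.closure (S : Set Γ) ≤ G₀ := (Subgroup.closure_le _).2 hsub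
    rw [hS] at this
    exact fun g => this (Subgroup.mem_top g)
  -- the representation with entries in A
  set M : Γ →* Matrix (Fin n) (Fin n) A := matEntryHom ρ A (fun g => (hG g).1) with hM
  -- a nonzero element of A detecting w
  have hρw : (ρ w : Matrix (Fin n) (Fin n) K) ≠ 1 := by
    intro h
    apply hw
    apply hρ
    rw [map_one]
    exact Units.ext h
  obtain ⟨i, j, hij⟩ : ∃ i j, (ρ w : Matrix (Fin n) (Fin n) K) i j
      ≠ (1 : Matrix (Fin n) (Fin n) K) i j := by
    by_contra h
    push_neg at h
    exact hρw (Matrix.ext h)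
  set a : A := M w i j - (1 : Matrix (Fin n) (Fin n) A) i j with ha
  have ha0 : a ≠ 0 := by
    intro h
    apply hij
    rw [ha, sub_eq_zero] at h
    have h' : ((M w i j : A) : K) = (((1 : Matrix (Fin n) (Fin n) A) i j : A) : K) :=
      congrArg (Subalgebra.val A) h
    rw [hM, matEntryHom_coe] at h'
    rw [h']
    simp [Matrix.one_apply, apply_ite]
  -- find a maximal ideal avoiding a
  haveI : IsJacobsonRing ℤ := my_isJacobsonRing_int
  haveI : IsJacobsonRing A := isJacobsonRing_of_finiteType (A := ℤ)
  have hbot : (⊥ : Ideal A).jacobson = ⊥ := by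
    rw [← Ideal.radical_eq_jacobson]
    exact Ideal.radical_bot_of_noZeroDivisors
  obtain ⟨m, ⟨-, hmmax⟩, ham⟩ : ∃ m : Ideal A, (⊥ ≤ m ∧ m.IsMaximal) ∧ a ∉ m := by
    by_contra h
    push_neg at h
    have : a ∈ (⊥ : Ideal A).jacobson := by
      rw [Ideal.jacobson]
      exact Ideal.mem_sInf.2 fun {J} hJ => h J hJ
    rw [hbot] at this
    exact ha0 this
  haveI := hmmax
  letI F := A ⧸ m
  letI : Field F := Ideal.Quotient.field m
  haveI : Algebra.FiniteType ℤ F :=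
    Algebra.FiniteType.of_surjective (Ideal.Quotient.mkₐ ℤ m)
      (Ideal.Quotient.mkₐ_surjective ℤ m)
  haveI : Module.Finite ℤ F := by
    have hfin := finite_of_finite_type_of_isJacobsonRing ℤ F
    have e : (Algebra.toModule : Module ℤ F) = AddCommGroup.toIntModule F := by
      letI := AddCommGroup.uniqueIntModule (M := F)
      exact Subsingleton.elim _ _
    exact e ▸ hfin
  haveI : Finite F := my_finite_of_moduleFinite_int F
  -- the finite quotient
  set ψ : Γ →* Matrix (Fin n) (Fin n) F :=
    ((Ideal.Quotient.mk m).mapMatrix.toMonoidHom.comp M) with hψ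
  refine ⟨(Matrix (Fin n) (Fin n) F)ˣ, inferInstance, inferInstance, ψ.toHomUnits, ?_⟩
  intro h
  apply ham
  have h1 : ψ w = 1 := congrArg Units.val h
  have h2 : Ideal.Quotient.mk m (M w i j)
      = Ideal.Quotient.mk m ((1 : Matrix (Fin n) (Fin n) A) i j) := by
    have h3 := congrFun (congrFun (congrArg (fun X => (X : Matrix (Fin n) (Fin n) F)) h1) i) j
    simp only [hψ, MonoidHom.comp_apply, RingHom.toMonoidHom_eq_coe, MonoidHom.coe_coe,
      RingHom.mapMatrix_apply, Matrix.map_apply] at h3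
    rw [h3]
    simp [Matrix.one_apply, apply_ite]
  have : Ideal.Quotient.mk m a = 0 := by
    rw [ha, map_sub, h2, sub_self]
  exact (Ideal.Quotient.eq_zero_iff_mem).1 this
end
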